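/- From the linear lattice to a matrix Riccati lattice: let A_n, B_n, C_n be constant k×k complex matrices indexed by an integer n, and let W_n : ℝ → (k×k complex matrices) be differentiable with W_n(t) invertible for all n and t, satisfying the linear system Ẇ_n = A_n W_n + B_n W_{n+1} + C_n W_{n−1}. Then the matrices V_n(t) := W_{n+1}(t) W_n(t)⁻¹ are invertible and satisfy the nonlinear system V̇_n = A_{n+1} V_n − V_n A_n + B_{n+1} V_{n+1} V_n − V_n B_n V_n + C_{n+1} − V_n C_n V_{n−1}⁻¹. -/

import Mathlib

/-!
Differentiate `V_n = W_{n+1} W_n⁻¹` by the product rule and the derivative `-W⁻¹ Ẇ W⁻¹` of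
matrix inversion, substitute the linear lattice for `Ẇ_{n+1}` and `Ẇ_n`, and express the
resulting ratios through `V`: `W_{n+2} W_n⁻¹ = V_{n+1} V_n` and `W_{n-1} W_n⁻¹ = V_{n-1}⁻¹`.
-/

open Matrix

attribute [local instance] Matrix.normedAddCommGroup Matrix.normedSpace

theorem HasDerivAt.ringInverse {𝕜 R : Type*} [NontriviallyNormedField 𝕜] [NormedRing R]
    [HasSummableGeomSeries R] [NormedAlgebra 𝕜 R] {g : 𝕜 → R} {g' : R} {t : 𝕜}
    (hg : HasDerivAt g g' t) (ht : IsUnit (g t)) :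
    HasDerivAt (fun s => Ring.inverse (g s))
      (-(Ring.inverse (g t) * g' * Ring.inverse (g t))) t := by
  obtain ⟨u, hu⟩ := ht
  have h := hasFDerivAt_ringInverse (𝕜 := 𝕜) u
  rw [hu] at h
  simpa [← hu, Function.comp_def] using h.comp_hasDerivAt t hg

namespace Matrix

/- `HasDerivAt` only sees the topology, so matrices may be differentiated inside the normed
algebra of the `L∞` operator norm, whose topology is that of the entrywise sup norm. -/

variable {𝕜 α n : Type*} [NontriviallyNormedField 𝕜] [Fintype n] [DecidableEq n]

theorem hasDerivAt_mul [NormedRing α] [NormedAlgebra 𝕜 α] {f g : 𝕜 → Matrix n n α}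
    {f' g' : Matrix n n α} {t : 𝕜} (hf : HasDerivAt f f' t) (hg : HasDerivAt g g' t) :
    HasDerivAt (fun s => f s * g s) (f' * g t + f t * g') t := by
  let := Matrix.linftyOpNormedRing (n := n) (α := α)
  let := Matrix.linftyOpNormedAlgebra (R := 𝕜) (n := n) (α := α)
  exact hf.fun_mul hg

variable [NormedCommRing α] [CompleteSpace α] [NormedAlgebra 𝕜 α]

theorem hasDerivAt_inv {g : 𝕜 → Matrix n n α} {g' : Matrix n n α} {t : 𝕜}
    (hg : HasDerivAt g g' t) (ht : IsUnit (g t)) :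
    HasDerivAt (fun s => (g s)⁻¹) (-((g t)⁻¹ * g' * (g t)⁻¹)) t := by
  let := Matrix.linftyOpNormedRing (n := n) (α := α)
  let := Matrix.linftyOpNormedAlgebra (R := 𝕜) (n := n) (α := α)
  have : HasSummableGeomSeries (Matrix n n α) :=
    @instHasSummableGeomSeriesOfCompleteSpace _ _ (inferInstanceAs (CompleteSpace (n → n → α)))
  simp only [nonsing_inv_eq_ringInverse]
  exact hg.ringInverse ht

theorem hasDerivAt_mul_inv {f g : 𝕜 → Matrix n n α} {f' g' : Matrix n n α} {t : 𝕜}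
    (hf : HasDerivAt f f' t) (hg : HasDerivAt g g' t) (ht : IsUnit (g t)) :
    HasDerivAt (fun s => f s * (g s)⁻¹) ((f' - f t * (g t)⁻¹ * g') * (g t)⁻¹) t := by
  refine (hasDerivAt_mul hf (hasDerivAt_inv hg ht)).congr_deriv ?_
  rw [mul_neg, ← sub_eq_add_neg, sub_mul]
  simp only [mul_assoc]

end Matrix

theorem linear_lattice_to_riccati_lattice (k : ℕ)
    (A B C : ℤ → Matrix (Fin k) (Fin k) ℂ)
    (W : ℤ → ℝ → Matrix (Fin k) (Fin k) ℂ)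
    (hWinv : ∀ n t, IsUnit (W n t))
    (hW : ∀ n t, HasDerivAt (W n)
      (A n * W n t + B n * W (n + 1) t + C n * W (n - 1) t) t)
    (V : ℤ → ℝ → Matrix (Fin k) (Fin k) ℂ)
    (hV : ∀ n t, V n t = W (n + 1) t * (W n t)⁻¹) :
    (∀ n t, IsUnit (V n t)) ∧
    ∀ n t, HasDerivAt (V n)
      (A (n + 1) * V n t - V n t * A n + B (n + 1) * (V (n + 1) t * V n t)
        - V n t * B n * V n t + C (n + 1) - V n t * C n * (V (n - 1) t)⁻¹) t := by
  have hdet n t : IsUnit (W n t).det := (isUnit_iff_isUnit_det _).mp (hWinv n t)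
  refine ⟨fun n t => hV n t ▸ (hWinv (n + 1) t).mul (isUnit_nonsing_inv_iff.mpr (hWinv n t)),
    fun n t => ?_⟩
  have hVV : V (n + 1) t * V n t = W (n + 1 + 1) t * (W n t)⁻¹ := by
    rw [hV, hV, mul_assoc, nonsing_inv_mul_cancel_left _ _ (hdet _ _)]
  have hV_inv : (V (n - 1) t)⁻¹ = W (n - 1) t * (W n t)⁻¹ := by
    rw [hV, sub_add_cancel, Matrix.mul_inv_rev, nonsing_inv_nonsing_inv _ (hdet _ _)]
  have hderiv := hasDerivAt_mul_inv (hW (n + 1) t) (hW n t) (hWinv n t)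
  rw [← funext (hV n)] at hderiv
  refine hderiv.congr_deriv ?_
  rw [hVV, hV_inv, hV n t, add_sub_cancel_right]
  simp only [add_mul, sub_mul, mul_add, mul_assoc, mul_nonsing_inv _ (hdet n t), mul_one]
  abel
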